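/- arXiv:2602.12513 — 3 statements merged into one kernel-verified Lean document; each statement's English description precedes it below -/
import Mathlib

section
/- Let (x*, μ*) be an optimal solution to the primal LP min{μ : μ·e ⪰ Aᵀx, eᵀx = 1, x ⪰ 0} and let (y*, ν*) be an optimal solution to the dual LP max{ν : ν·e ⪯ Ay, eᵀy = 1, y ⪰ 0}. Then (x*, y*) is a Nash equilibrium of the matrix game, i.e., for all x ∈ Δ_{m1} and y ∈ Δ_{m2}: x*ᵀAy ≤ x*ᵀAy* ≤ xᵀAy*. -/
/-!
By the von Neumann minimax theorem (Sion's theorem for the bilinear payoff on the product of two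
simplices) the game has a saddle point `(a, b)` with value `v = aᵀAb`. Testing the saddle inequalities
against pure strategies shows that `(a, v)` is primal feasible and `(b, v)` dual feasible, so
optimality gives `μ* ≤ v ≤ ν*`. Weighted averages of the feasibility constraints give
`x*ᵀAy ≤ μ*` and `ν* ≤ xᵀAy*` for all mixed strategies, and the two chains combine to the
equilibrium inequalities.
-/

open Matrix

variable {ι κ : Type*} [Fintype ι] [Fintype κ]

lemma nonempty_of_mem_stdSimplex {x : ι → ℝ} (hx : x ∈ stdSimplex ℝ ι) : Nonempty ι :=
  not_isEmpty_iff.mp fun _ ↦ by simp [stdSimplex_of_isEmpty_index] at hx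

lemma dotProduct_le_of_mem_stdSimplex {v y : κ → ℝ} {c : ℝ} (hy : y ∈ stdSimplex ℝ κ)
    (hv : ∀ j, v j ≤ c) : v ⬝ᵥ y ≤ c :=
  calc v ⬝ᵥ y = ∑ j, v j * y j := rfl
    _ ≤ ∑ j, c * y j := Finset.sum_le_sum fun j _ ↦ mul_le_mul_of_nonneg_right (hv j) (hy.1 j)
    _ = c := by rw [← Finset.mul_sum, hy.2, mul_one]

lemma le_dotProduct_of_mem_stdSimplex {x v : ι → ℝ} {c : ℝ} (hx : x ∈ stdSimplex ℝ ι)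
    (hv : ∀ i, c ≤ v i) : c ≤ x ⬝ᵥ v :=
  calc c = ∑ i, x i * c := by rw [← Finset.sum_mul, hx.2, one_mul]
    _ ≤ ∑ i, x i * v i := Finset.sum_le_sum fun i _ ↦ mul_le_mul_of_nonneg_left (hv i) (hx.1 i)
    _ = x ⬝ᵥ v := rfl

lemma Matrix.sum_sum_mul_mul_eq_dotProduct_mulVec (x : ι → ℝ) (A : Matrix ι κ ℝ) (y : κ → ℝ) :
    ∑ i, ∑ j, x i * A i j * y j = x ⬝ᵥ A *ᵥ y := by
  simp only [dotProduct, mulVec, Finset.mul_sum, mul_assoc]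

theorem Matrix.exists_isSaddlePointOn_stdSimplex [Nonempty ι] [Nonempty κ] (A : Matrix ι κ ℝ) :
    ∃ a ∈ stdSimplex ℝ ι, ∃ b ∈ stdSimplex ℝ κ,
      IsSaddlePointOn (stdSimplex ℝ ι) (stdSimplex ℝ κ) (fun x y ↦ x ⬝ᵥ A *ᵥ y) a b := by
  classical
  have hX := convex_stdSimplex ℝ ι
  have hY := convex_stdSimplex ℝ κ
  refine Sion.exists_isSaddlePointOn ⟨_, single_mem_stdSimplex ℝ (Classical.arbitrary ι)⟩ hX
    (isCompact_stdSimplex ℝ ι) (fun y _ ↦ ?lsc) (fun y _ ↦ ?qcvx) hY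
    ⟨_, single_mem_stdSimplex ℝ (Classical.arbitrary κ)⟩ (isCompact_stdSimplex ℝ κ)
    (fun x _ ↦ ?usc) (fun x _ ↦ ?qccv)
  case lsc =>
    exact (by fun_prop : Continuous fun x : ι → ℝ ↦ x ⬝ᵥ A *ᵥ y).lowerSemicontinuous
      |>.lowerSemicontinuousOn _
  case qcvx => exact (((dotProductBilin ℝ ℝ).flip (A *ᵥ y)).convexOn hX).quasiconvexOn
  case usc =>
    exact (by fun_prop : Continuous fun y : κ → ℝ ↦ x ⬝ᵥ A *ᵥ y).upperSemicontinuous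
      |>.upperSemicontinuousOn _
  case qccv => exact ((((dotProductBilin ℝ ℝ) x).comp A.mulVecLin).concaveOn hY).quasiconcaveOn

section SaddlePoint

variable {A : Matrix ι κ ℝ} {a : ι → ℝ} {b : κ → ℝ}

lemma IsSaddlePointOn.mulVec_transpose_le
    (h : IsSaddlePointOn (stdSimplex ℝ ι) (stdSimplex ℝ κ) (fun x y ↦ x ⬝ᵥ A *ᵥ y) a b)
    (ha : a ∈ stdSimplex ℝ ι) (j : κ) : (Aᵀ *ᵥ a) j ≤ a ⬝ᵥ A *ᵥ b := by
  classical
  have hj : a ⬝ᵥ A *ᵥ Pi.single j 1 ≤ a ⬝ᵥ A *ᵥ b :=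
    h a ha (Pi.single j 1) (single_mem_stdSimplex ℝ j)
  rw [mulVec_single_one] at hj
  exact (dotProduct_comm (A.col j) a).trans_le hj

lemma IsSaddlePointOn.le_mulVec
    (h : IsSaddlePointOn (stdSimplex ℝ ι) (stdSimplex ℝ κ) (fun x y ↦ x ⬝ᵥ A *ᵥ y) a b)
    (hb : b ∈ stdSimplex ℝ κ) (i : ι) : a ⬝ᵥ A *ᵥ b ≤ (A *ᵥ b) i := by
  classical
  have hi : a ⬝ᵥ A *ᵥ b ≤ Pi.single i 1 ⬝ᵥ A *ᵥ b :=
    h (Pi.single i 1) (single_mem_stdSimplex ℝ i) b hb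
  rwa [single_one_dotProduct] at hi

end SaddlePoint

/-- If `(x*, μ*)` is optimal for the primal game LP and `(y*, ν*)` is
optimal for the dual game LP, then `(x*, y*)` is a Nash equilibrium:
`x*ᵀAy ≤ x*ᵀAy* ≤ xᵀAy*` for all simplex strategies `x, y`. -/
theorem stmt_1 (m1 m2 : ℕ) (A : Matrix (Fin m1) (Fin m2) ℝ)
    (xs : Fin m1 → ℝ) (μs : ℝ) (ys : Fin m2 → ℝ) (νs : ℝ)
    (hxfeas : (∀ i, 0 ≤ xs i) ∧ (∑ i, xs i) = 1 ∧ ∀ j, (∑ i, A i j * xs i) ≤ μs)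
    (hxopt : ∀ (x : Fin m1 → ℝ) (μ : ℝ), (∀ i, 0 ≤ x i) → (∑ i, x i) = 1 →
      (∀ j, (∑ i, A i j * x i) ≤ μ) → μs ≤ μ)
    (hyfeas : (∀ j, 0 ≤ ys j) ∧ (∑ j, ys j) = 1 ∧ ∀ i, νs ≤ ∑ j, A i j * ys j)
    (hyopt : ∀ (y : Fin m2 → ℝ) (ν : ℝ), (∀ j, 0 ≤ y j) → (∑ j, y j) = 1 →
      (∀ i, ν ≤ ∑ j, A i j * y j) → ν ≤ νs) :
    ∀ x ∈ stdSimplex ℝ (Fin m1), ∀ y ∈ stdSimplex ℝ (Fin m2),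
      (∑ i, ∑ j, xs i * A i j * y j) ≤ (∑ i, ∑ j, xs i * A i j * ys j) ∧
      (∑ i, ∑ j, xs i * A i j * ys j) ≤ ∑ i, ∑ j, x i * A i j * ys j := by
  obtain ⟨hxs_nonneg, hxs_sum, hxs_col⟩ := hxfeas
  obtain ⟨hys_nonneg, hys_sum, hys_row⟩ := hyfeas
  have hxs : xs ∈ stdSimplex ℝ (Fin m1) := ⟨hxs_nonneg, hxs_sum⟩
  have hys : ys ∈ stdSimplex ℝ (Fin m2) := ⟨hys_nonneg, hys_sum⟩
  have := nonempty_of_mem_stdSimplex hxs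
  have := nonempty_of_mem_stdSimplex hys
  obtain ⟨a, ha, b, hb, hab⟩ := A.exists_isSaddlePointOn_stdSimplex
  have hμν : μs ≤ νs :=
    calc μs ≤ a ⬝ᵥ A *ᵥ b := hxopt a _ ha.1 ha.2 (hab.mulVec_transpose_le ha)
      _ ≤ νs := hyopt b _ hb.1 hb.2 (hab.le_mulVec hb)
  have hupper : ∀ y ∈ stdSimplex ℝ (Fin m2), xs ⬝ᵥ A *ᵥ y ≤ μs := fun y hy ↦ by
    rw [dotProduct_mulVec, ← mulVec_transpose]
    exact dotProduct_le_of_mem_stdSimplex hy hxs_col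
  have hlower : ∀ x ∈ stdSimplex ℝ (Fin m1), νs ≤ x ⬝ᵥ A *ᵥ ys := fun x hx ↦
    le_dotProduct_of_mem_stdSimplex hx hys_row
  intro x hx y hy
  simp only [sum_sum_mul_mul_eq_dotProduct_mulVec]
  exact ⟨by linarith [hupper y hy, hlower xs hxs], by linarith [hupper ys hys, hlower x hx]⟩
end

section
/- For the primal game LP min{μ : μ·e^{m2} ⪰ Aᵀx, eᵀx = 1, x ⪰ 0}, there exist index sets I* ⊆ [m1] and J* ⊆ [m2] with |I*| = |J*| = d for some d ≤ min{m1, m2}, and an optimal solution (x*, μ*) such that x* vanishes outside I*, the square matrix [[Aᵀ_{I*,J*}, -e]; [eᵀ, 0]] of size (d+1)×(d+1) is nonsingular, and (x*_{I*}, μ*) is the unique solution to A_{I*,J*}ᵀ x_{I*} = μ·e^{|J*|} together with eᵀx_{I*} = 1. -/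
/-!
Take an extreme point `x` of the compact convex set of optimal strategies, with value `v`. If a
direction `w` supported on the support `I` of `x`, with `∑ w = 0`, shifted every tight payoff
`(Aᵀ x)_j = v` by the same amount `β`, then moving from `x` along `±w` would either beat the value
(if `β ≠ 0`) or stay optimal on both sides of `x` (if `β = 0`). So the bordered matrix on `I` and
all tight columns has trivial kernel, hence spanning rows, and the row `(e, 0)` extends to a basis
by rows of tight columns `J`; necessarily `|J| = |I|`.
-/

open Finset Matrix Filter Topology

theorem Matrix.span_row_eq_top_of_injective_mulVec {K m n : Type*} [Field K] [Fintype m]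
    [Fintype n] {M : Matrix m n K} (h : Function.Injective M.mulVec) :
    Submodule.span K (Set.range M.row) = ⊤ :=
  Submodule.eq_top_of_finrank_eq <| by
    rw [← rank_eq_finrank_span_row]
    exact LinearMap.finrank_range_of_inj (f := M.mulVecLin) h

theorem exists_linearIndependent_comp_sumMap {K V κ : Type*} [Field K] [AddCommGroup V]
    [Module K V] [FiniteDimensional K V] {d : ℕ} (hV : Module.finrank K V = d + 1)
    {g : κ ⊕ Unit → V} (hg : Submodule.span K (Set.range g) = ⊤) (hg0 : g (Sum.inr ()) ≠ 0) :
    ∃ J : Fin d → κ, LinearIndependent K (g ∘ Sum.map J id) := by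
  obtain ⟨b, -, hb0, hbspan, hbli⟩ :=
    exists_linearIndepOn_extension (LinearIndepOn.singleton (R := K) hg0) (Set.subset_univ _)
  let B : Set κ := {j | Sum.inl j ∈ b}
  let φ : B ⊕ Unit → b := Sum.elim (fun j => ⟨Sum.inl j, j.2⟩) fun _ => ⟨Sum.inr (), hb0 rfl⟩
  have hφ : Function.Injective φ := by
    rintro (j | _) (j' | _) h <;> simp_all [φ, Subtype.ext_iff]
  have hli : LinearIndependent K (g ∘ Sum.map (↑) id : B ⊕ Unit → V) := by
    convert hbli.comp φ hφ using 1
    ext (j | _) <;> rfl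
  have hspan : Submodule.span K (Set.range (g ∘ Sum.map (↑) id : B ⊕ Unit → V)) = ⊤ := by
    refine eq_top_iff.mpr (hg ▸ Submodule.span_le.mpr ?_)
    refine (Set.image_univ (f := g) ▸ hbspan).trans (Submodule.span_mono ?_)
    rintro _ ⟨(j | _), hj, rfl⟩
    exacts [⟨Sum.inl ⟨j, hj⟩, rfl⟩, ⟨Sum.inr (), rfl⟩]
  have : Finite (B ⊕ Unit) := hli.finite
  have : Fintype B := have : Finite B := .sum_left Unit; .ofFinite B
  have hcard : Fintype.card B = d := by
    have := linearIndependent_iff_card_eq_finrank_span.mp hli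
    rw [Set.finrank, hspan, finrank_top, hV, Fintype.card_sum, Fintype.card_unit] at this
    omega
  let e := Fintype.equivFinOfCardEq hcard
  refine ⟨Subtype.val ∘ e.symm, ?_⟩
  convert hli.comp (Sum.map e.symm id)
    (Sum.map_injective.mpr ⟨e.symm.injective, Function.injective_id⟩) using 1
  ext (k | _) <;> rfl

theorem Function.Injective.sum_mul_extend_zero {ι n R : Type*} [Fintype ι] [Fintype n]
    [NonUnitalNonAssocSemiring R] {I : n → ι} (hI : Function.Injective I) (g : ι → R)
    (y : n → R) : ∑ i, g i * Function.extend I y 0 i = ∑ k, g (I k) * y k := by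
  refine (Fintype.sum_of_injective I hI _ _ (fun i hi => ?_) fun k => by rw [hI.extend_apply]).symm
  rw [Function.extend_apply' _ _ _ fun ⟨k, hk⟩ => hi ⟨k, hk⟩, Pi.zero_apply, mul_zero]

section Bordered

variable {R : Type*} [CommRing R] {m n : Type*}

def bordered (B : Matrix n m R) : Matrix (m ⊕ Unit) (n ⊕ Unit) R :=
  fromBlocks Bᵀ (replicateCol Unit (-1)) (replicateRow Unit 1) 0

theorem bordered_submatrix {m' : Type*} (B : Matrix n m R) (J : m' → m) :
    (bordered B).submatrix (Sum.map J id) id = bordered (B.submatrix id J) := by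
  ext (j | _) (i | _) <;> rfl

variable [Fintype n]

theorem bordered_mulVec (B : Matrix n m R) (x : n ⊕ Unit → R) :
    bordered B *ᵥ x =
      Sum.elim (Bᵀ *ᵥ (x ∘ Sum.inl) - fun _ => x (Sum.inr ())) fun _ => ∑ i, x (Sum.inl i) := by
  ext (j | _) <;> simp [bordered, sub_eq_add_neg, mulVec, dotProduct]

theorem eq_of_isUnit_bordered [DecidableEq n] {B : Matrix n n R} (hB : IsUnit (bordered B))
    {y z : n → R} {μ ν : R} (hy : Bᵀ *ᵥ y = fun _ => μ) (hy₁ : ∑ i, y i = 1)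
    (hz : Bᵀ *ᵥ z = fun _ => ν) (hz₁ : ∑ i, z i = 1) : y = z ∧ μ = ν := by
  have key : bordered B *ᵥ Sum.elim y (fun _ => μ) = bordered B *ᵥ Sum.elim z (fun _ => ν) := by
    simp [bordered_mulVec, hy, hy₁, hz, hz₁]
  have h := mulVec_injective_of_isUnit hB key
  exact ⟨funext fun i => by simpa using congrFun h (Sum.inl i),
    by simpa using congrFun h (Sum.inr ())⟩

end Bordered

section Game

variable {ι κ : Type*} [Fintype ι]

def optimalSet (A : Matrix ι κ ℝ) (v : ℝ) : Set (ι → ℝ) :=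
  stdSimplex ℝ ι ∩ {x | Aᵀ *ᵥ x ≤ fun _ => v}

theorem isCompact_optimalSet (A : Matrix ι κ ℝ) (v : ℝ) : IsCompact (optimalSet A v) :=
  (isCompact_stdSimplex ℝ ι).inter_right <|
    isClosed_le (continuous_const.matrix_mulVec continuous_id) continuous_const

theorem exists_game_value [Fintype κ] [Nonempty ι] [Nonempty κ] (A : Matrix ι κ ℝ) :
    ∃ v, (optimalSet A v).Nonempty ∧ ∀ x ∈ stdSimplex ℝ ι, ∃ j, v ≤ (Aᵀ *ᵥ x) j := by
  classical
  let f : (ι → ℝ) → ℝ := fun x => univ.sup' univ_nonempty (Aᵀ *ᵥ x)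
  have hf : Continuous f := Continuous.finset_sup'_apply _ fun j _ =>
    (continuous_apply j).comp (continuous_const.matrix_mulVec continuous_id)
  obtain ⟨x₀, hx₀, hmin⟩ := (isCompact_stdSimplex ℝ ι).exists_isMinOn
    ⟨_, single_mem_stdSimplex ℝ (Classical.arbitrary ι)⟩ hf.continuousOn
  refine ⟨f x₀, ⟨x₀, hx₀, fun j => le_sup' (Aᵀ *ᵥ x₀) (mem_univ j)⟩, fun x hx => ?_⟩
  obtain ⟨j, -, hj⟩ := exists_mem_eq_sup' univ_nonempty (Aᵀ *ᵥ x)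
  exact ⟨j, hj ▸ hmin hx⟩

theorem eq_zero_of_mem_extremePoints_optimalSet [Finite κ] {A : Matrix ι κ ℝ} {v : ℝ}
    (hv : ∀ x ∈ stdSimplex ℝ ι, ∃ j, v ≤ (Aᵀ *ᵥ x) j) {x : ι → ℝ}
    (hx : x ∈ (optimalSet A v).extremePoints ℝ) {w : ι → ℝ} {β : ℝ}
    (hwx : ∀ i, x i = 0 → w i = 0) (hw : ∑ i, w i = 0)
    (hwβ : ∀ j, (Aᵀ *ᵥ x) j = v → (Aᵀ *ᵥ w) j = β) : w = 0 := by
  obtain ⟨⟨hxΔ, hxv⟩, hext⟩ := hx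
  let U : Set ℝ := {s | x + s • w ∈ stdSimplex ℝ ι ∧
    ∀ j, (Aᵀ *ᵥ x) j ≠ v → (Aᵀ *ᵥ (x + s • w)) j < v}
  have hpath : Tendsto (fun t : ℝ => x + t • w) (𝓝 0) (𝓝 x) := by
    simpa using ((tendsto_id (x := 𝓝 (0 : ℝ))).smul_const w).const_add x
  have hU : U ∈ 𝓝 (0 : ℝ) := by
    refine ((eventually_all.mpr fun i => ?_).and (eventually_all.mpr fun j => ?_)).mono
      fun t ht => ⟨⟨ht.1, ?_⟩, ht.2⟩
    · rcases (hxΔ.1 i).eq_or_lt with hi | hi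
      · exact Eventually.of_forall fun t => by simp [← hi, hwx i hi.symm]
      · exact ((continuous_apply i).tendsto x |>.comp hpath).eventually_const_le hi
    · rcases (hxv j).lt_or_eq with hlt | heq
      · refine ((((continuous_apply j).comp (continuous_const.matrix_mulVec continuous_id)).tendsto
          x).comp hpath |>.eventually_lt_const hlt).mono fun t ht _ => ht
      · exact Eventually.of_forall fun t h => absurd heq h
    · simp only [Pi.add_apply, Pi.smul_apply, smul_eq_mul, sum_add_distrib, ← mul_sum, hxΔ.2, hw,
        mul_zero, add_zero]
  obtain ⟨t, ⟨htU, hmtU⟩, ht⟩ : ∃ t, (t ∈ U ∧ -t ∈ U) ∧ 0 < t :=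
    ((Eventually.and hU ((continuous_neg.tendsto' 0 0 neg_zero).eventually hU)).filter_mono
      nhdsWithin_le_nhds |>.and (self_mem_nhdsWithin (s := Set.Ioi 0))).exists
  have htight : ∀ s j, (Aᵀ *ᵥ x) j = v → (Aᵀ *ᵥ (x + s • w)) j = v + s * β := by
    intro s j hj
    simp [mulVec_add, mulVec_smul, hj, hwβ j hj]
  -- optimality of `v` rules out moving the tight columns in either direction
  have hβ_nonneg : ∀ s ∈ U, 0 ≤ s * β := by
    rintro s ⟨hsΔ, hslack⟩
    obtain ⟨j, hj⟩ := hv _ hsΔ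
    by_cases hjv : (Aᵀ *ᵥ x) j = v
    · linarith [htight s j hjv]
    · exact absurd hj (hslack j hjv).not_ge
  have hβ : β = 0 := by
    have : t * β = 0 := by linarith [hβ_nonneg t htU, hβ_nonneg (-t) hmtU, neg_mul t β]
    exact (mul_eq_zero.mp this).resolve_left ht.ne'
  have hmem : ∀ s ∈ U, x + s • w ∈ optimalSet A v := by
    rintro s ⟨hsΔ, hslack⟩
    refine ⟨hsΔ, fun j => ?_⟩
    by_cases hjv : (Aᵀ *ᵥ x) j = v
    · simp [htight s j hjv, hβ]
    · exact (hslack j hjv).le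
  have hseg : x ∈ openSegment ℝ (x + t • w) (x + (-t) • w) :=
    ⟨1 / 2, 1 / 2, by norm_num, by norm_num, by norm_num, by
      ext i; simp only [Pi.add_apply, Pi.smul_apply, smul_eq_mul]; ring⟩
  have htw : t • w = 0 := add_eq_left.mp (hext (hmem t htU) (hmem (-t) hmtU) hseg)
  exact (smul_eq_zero.mp htw).resolve_left ht.ne'

theorem injective_mulVec_bordered_of_mem_extremePoints [Fintype κ] {n : Type*} [Fintype n]
    {A : Matrix ι κ ℝ} {v : ℝ}
    (hv : ∀ x ∈ stdSimplex ℝ ι, ∃ j, v ≤ (Aᵀ *ᵥ x) j) {x : ι → ℝ}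
    (hx : x ∈ (optimalSet A v).extremePoints ℝ) {I : n → ι} (hI : Function.Injective I)
    (hIx : ∀ k, x (I k) ≠ 0) :
    Function.Injective
      (bordered (A.submatrix I (Subtype.val : {j // (Aᵀ *ᵥ x) j = v} → κ))).mulVec := by
  refine (injective_iff_map_eq_zero (bordered _).mulVecLin).mpr fun c hc => ?_
  rw [mulVecLin_apply, bordered_mulVec] at hc
  have hrow : ∀ j, ((A.submatrix I Subtype.val)ᵀ *ᵥ (c ∘ Sum.inl)) j = c (Sum.inr ()) :=
    fun j => sub_eq_zero.mp (congrFun hc (Sum.inl j))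
  have hsum : ∑ k, c (Sum.inl k) = 0 := congrFun hc (Sum.inr ())
  have hw : Function.extend I (c ∘ Sum.inl) 0 = 0 :=
    eq_zero_of_mem_extremePoints_optimalSet hv hx
      (fun i hi => Function.extend_apply' _ _ _ fun ⟨k, hk⟩ => hIx k (hk ▸ hi))
      (by simpa [hsum] using hI.sum_mul_extend_zero 1 (c ∘ Sum.inl))
      (fun j hj => (hI.sum_mul_extend_zero _ _).trans (hrow ⟨j, hj⟩))
  have hinl : c ∘ Sum.inl = 0 :=
    funext fun k => by simpa [hI.extend_apply] using congrFun hw (I k)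
  obtain ⟨j, hj⟩ := hv x hx.1.1
  have hinr : c (Sum.inr ()) = 0 := by
    rw [← hrow ⟨j, le_antisymm (hx.1.2 j) hj⟩, hinl, mulVec_zero, Pi.zero_apply]
  ext (k | _)
  exacts [congrFun hinl k, hinr]

theorem exists_isUnit_bordered_of_mem_extremePoints [Fintype κ] {A : Matrix ι κ ℝ} {v : ℝ}
    (hv : ∀ x ∈ stdSimplex ℝ ι, ∃ j, v ≤ (Aᵀ *ᵥ x) j) {x : ι → ℝ}
    (hx : x ∈ (optimalSet A v).extremePoints ℝ) {d : ℕ} {I : Fin d → ι}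
    (hI : Function.Injective I) (hIx : ∀ i, x i ≠ 0 ↔ i ∈ Set.range I) :
    ∃ J : Fin d → κ, Function.Injective J ∧ (∀ k, (Aᵀ *ᵥ x) (J k) = v) ∧
      IsUnit (bordered (A.submatrix I J)) := by
  obtain ⟨i, hi⟩ : ∃ i, x i ≠ 0 := by
    by_contra! h
    simpa [h] using hx.1.1.2
  obtain ⟨k₀, -⟩ := (hIx i).mp hi
  have hone : (bordered (A.submatrix I (Subtype.val : {j // (Aᵀ *ᵥ x) j = v} → κ))).row
      (Sum.inr ()) ≠ 0 := fun h => by simpa [bordered] using congrFun h (Sum.inl k₀)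
  obtain ⟨J, hJ⟩ := exists_linearIndependent_comp_sumMap (d := d) (by simp)
    (span_row_eq_top_of_injective_mulVec <| injective_mulVec_bordered_of_mem_extremePoints
      hv hx hI fun k => (hIx (I k)).mpr ⟨k, rfl⟩) hone
  refine ⟨Subtype.val ∘ J, Subtype.val_injective.comp ?_, fun k => (J k).2, ?_⟩
  · exact fun a b hab => Sum.inl_injective (hJ.injective (by simp [hab]))
  · rw [← linearIndependent_rows_iff_isUnit, show A.submatrix I (Subtype.val ∘ J) =
      (A.submatrix I Subtype.val).submatrix id J from rfl, ← bordered_submatrix]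
    exact hJ

end Game

/-- For the primal game LP there exist index sets `I*, J*` of equal
size `d ≤ min m1 m2` and an optimal solution `(x*, μ*)` supported on `I*`, such
that the bordered matrix `[[Aᵀ_{I*,J*}, -e]; [eᵀ, 0]]` is nonsingular and
`(x*_{I*}, μ*)` is the unique solution of `A_{I*,J*}ᵀ x_{I*} = μ·e`, `eᵀx_{I*} = 1`. -/
theorem stmt_3 (m1 m2 : ℕ) (hm1 : 0 < m1) (hm2 : 0 < m2)
    (A : Matrix (Fin m1) (Fin m2) ℝ) :
    ∃ (d : ℕ) (I : Fin d → Fin m1) (J : Fin d → Fin m2),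
      d ≤ min m1 m2 ∧ Function.Injective I ∧ Function.Injective J ∧
      ∃ (xs : Fin m1 → ℝ) (μs : ℝ),
        -- (xs, μs) is a feasible solution of the primal LP
        ((∀ i, 0 ≤ xs i) ∧ (∑ i, xs i) = 1 ∧ (∀ j, (∑ i, A i j * xs i) ≤ μs)) ∧
        -- (xs, μs) is optimal
        (∀ (x : Fin m1 → ℝ) (μ : ℝ), (∀ i, 0 ≤ x i) → (∑ i, x i) = 1 →
          (∀ j, (∑ i, A i j * x i) ≤ μ) → μs ≤ μ) ∧
        -- xs vanishes outside I
        (∀ i, i ∉ Set.range I → xs i = 0) ∧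
        -- the bordered matrix is nonsingular
        (Matrix.of (Sum.elim
            (fun j : Fin d => Sum.elim (fun i : Fin d => A (I i) (J j))
              (fun _ : Unit => (-1 : ℝ)))
            (fun _ : Unit => Sum.elim (fun _ : Fin d => (1 : ℝ))
              (fun _ : Unit => (0 : ℝ))))).det ≠ 0 ∧
        -- (xs restricted to I, μs) solves the linear system
        ((∀ j : Fin d, (∑ i, A (I i) (J j) * xs (I i)) = μs) ∧ (∑ i, xs (I i)) = 1) ∧
        -- and is the unique solution of that system
        (∀ (xI : Fin d → ℝ) (μ : ℝ),
          (∀ j : Fin d, (∑ i, A (I i) (J j) * xI i) = μ) → (∑ i, xI i) = 1 →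
          xI = (fun i => xs (I i)) ∧ μ = μs) := by
  have : Nonempty (Fin m1) := ⟨⟨0, hm1⟩⟩
  have : Nonempty (Fin m2) := ⟨⟨0, hm2⟩⟩
  obtain ⟨v, hne, hv⟩ := exists_game_value A
  obtain ⟨xs, hxs⟩ := (isCompact_optimalSet A v).extremePoints_nonempty hne
  obtain ⟨hxsΔ, hxsv⟩ := hxs.1
  let I := (univ.filter (xs · ≠ 0)).orderEmbOfFin rfl
  have hIx : ∀ i, xs i ≠ 0 ↔ i ∈ Set.range I := by simp [I, range_orderEmbOfFin]
  obtain ⟨J, hJ, hJv, hunit⟩ :=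
    exists_isUnit_bordered_of_mem_extremePoints hv hxs I.injective hIx
  have hsumI (g : Fin m1 → ℝ) : ∑ k, g (I k) * xs (I k) = ∑ i, g i * xs i :=
    Fintype.sum_of_injective I I.injective _ _
      (fun i hi => by rw [not_not.mp (mt (hIx i).mp hi), mul_zero]) fun _ => rfl
  have hsys : (A.submatrix I J)ᵀ *ᵥ (xs ∘ I) = fun _ => v :=
    funext fun k => (hsumI _).trans (hJv k)
  have hsys₁ : ∑ k, xs (I k) = 1 := by simpa [hxsΔ.2] using hsumI 1
  refine ⟨_, I, J, le_min ?_ ?_, I.injective, hJ, xs, v, ⟨hxsΔ.1, hxsΔ.2, hxsv⟩,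
    fun x μ hx₀ hx₁ hxμ => ?_, fun i hi => not_not.mp (mt (hIx i).mp hi),
    ((isUnit_iff_isUnit_det _).mp hunit).ne_zero, ⟨congrFun hsys, hsys₁⟩,
    fun xI μ hxI hxI₁ => eq_of_isUnit_bordered hunit (funext hxI) hxI₁ hsys hsys₁⟩
  · simpa using card_le_univ (univ.filter (xs · ≠ 0))
  · simpa using Fintype.card_le_of_injective J hJ
  · obtain ⟨j, hj⟩ := hv x ⟨hx₀, hx₁⟩
    exact hj.trans (hxμ j)
end

section
/- Suppose δ > 0 is the minimal positive gap min{V_I − V : V_I − V > 0, I ⊆ [m1]} for the primal game LP of matrix A, and suppose Â satisfies |Â_{ij} − A_{ij}| ≤ r entrywise with r < δ/2. If a subset I ⊆ [m1] satisfies V̂_I = V̂ (i.e., I is optimal-support for the empirical LP), then V_I = V (I is optimal-support for the true LP). -/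
/-!
The support-restricted value `V_I` only grows when the support shrinks, so `V ≤ V_I`; and an
entrywise perturbation of size `r` moves every `V_I` by at most `r`. Hence
`V_I ≤ V̂_I + r = V̂ + r ≤ V + 2r < V + δ`, and minimality of the positive gap `δ`
forces `V_I = V`.
-/

/-- The value of the primal game LP for matrix `A` with the row player's
strategy restricted to the support `I`. (Taking `I = univ` gives the
unrestricted LP value.) -/
noncomputable def LPval {m1 m2 : ℕ} (A : Matrix (Fin m1) (Fin m2) ℝ)
    (I : Finset (Fin m1)) : ℝ :=
  sInf {μ : ℝ | ∃ x : Fin m1 → ℝ, (∀ i, 0 ≤ x i) ∧ (∀ i, i ∉ I → x i = 0) ∧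
    (∑ i, x i) = 1 ∧ ∀ j, (∑ i, A i j * x i) ≤ μ}

def lpFeasibleValues {m1 m2 : ℕ} (A : Matrix (Fin m1) (Fin m2) ℝ) (I : Finset (Fin m1)) :
    Set ℝ :=
  {μ : ℝ | ∃ x : Fin m1 → ℝ, (∀ i, 0 ≤ x i) ∧ (∀ i, i ∉ I → x i = 0) ∧
    (∑ i, x i) = 1 ∧ ∀ j, (∑ i, A i j * x i) ≤ μ}

namespace LPval

variable {m1 m2 : ℕ} {A B : Matrix (Fin m1) (Fin m2) ℝ} {I J : Finset (Fin m1)}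

theorem eq_sInf (A : Matrix (Fin m1) (Fin m2) ℝ) (I : Finset (Fin m1)) :
    LPval A I = sInf (lpFeasibleValues A I) := rfl

theorem mem_lpFeasibleValues_of_row_le {i₀ : Fin m1} (hi₀ : i₀ ∈ I) {μ : ℝ}
    (hμ : ∀ j, A i₀ j ≤ μ) : μ ∈ lpFeasibleValues A I := by
  refine ⟨Pi.single i₀ 1, fun i => ?_, fun i hi => ?_, by simp,
    fun j => by simpa [Pi.single_apply] using hμ j⟩
  · by_cases h : i = i₀ <;> simp [h]
  · exact Pi.single_eq_of_ne (ne_of_mem_of_not_mem hi₀ hi).symm 1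

theorem lpFeasibleValues_nonempty (A : Matrix (Fin m1) (Fin m2) ℝ) (hI : I.Nonempty) :
    (lpFeasibleValues A I).Nonempty := by
  obtain ⟨i₀, hi₀⟩ := hI
  exact ⟨∑ j, |A i₀ j|, mem_lpFeasibleValues_of_row_le hi₀ fun j =>
    (le_abs_self _).trans
      (Finset.single_le_sum (fun j _ => abs_nonneg (A i₀ j)) (Finset.mem_univ j))⟩

theorem lpFeasibleValues_bddBelow [Nonempty (Fin m2)] (A : Matrix (Fin m1) (Fin m2) ℝ)
    (I : Finset (Fin m1)) : BddBelow (lpFeasibleValues A I) := by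
  obtain ⟨j₀⟩ := ‹Nonempty (Fin m2)›
  refine ⟨-∑ i, |A i j₀|, ?_⟩
  rintro μ ⟨x, hx₀, -, hx₁, hxμ⟩
  have hterm : ∀ i, -|A i j₀| ≤ A i j₀ * x i := fun i => by
    have hx_le : x i ≤ 1 :=
      hx₁ ▸ Finset.single_le_sum (fun i _ => hx₀ i) (Finset.mem_univ i)
    nlinarith [neg_abs_le (A i j₀), abs_nonneg (A i j₀), hx₀ i]
  calc -∑ i, |A i j₀| = ∑ i, -|A i j₀| := (Finset.sum_neg_distrib ..).symm
    _ ≤ ∑ i, A i j₀ * x i := Finset.sum_le_sum fun i _ => hterm i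
    _ ≤ μ := hxμ j₀

/-- Without columns every bound is feasible, and `sInf univ = 0` for the reals. -/
theorem eq_zero_of_isEmpty [IsEmpty (Fin m2)] (A : Matrix (Fin m1) (Fin m2) ℝ)
    (hI : I.Nonempty) : LPval A I = 0 := by
  obtain ⟨i₀, hi₀⟩ := hI
  have huniv : lpFeasibleValues A I = Set.univ :=
    Set.eq_univ_of_forall fun _ => mem_lpFeasibleValues_of_row_le hi₀ isEmptyElim
  rw [eq_sInf, huniv, Real.sInf_univ]

theorem le_of_subset [Nonempty (Fin m2)] (A : Matrix (Fin m1) (Fin m2) ℝ) (hJI : J ⊆ I)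
    (hJ : J.Nonempty) : LPval A I ≤ LPval A J := by
  refine csInf_le_csInf (lpFeasibleValues_bddBelow A I) (lpFeasibleValues_nonempty A hJ) ?_
  rintro μ ⟨x, hx₀, hxJ, hx₁, hxμ⟩
  exact ⟨x, hx₀, fun i hi => hxJ i fun hiJ => hi (hJI hiJ), hx₁, hxμ⟩

theorem le_add_of_le_add [Nonempty (Fin m2)] {r : ℝ} (hr : ∀ i j, B i j ≤ A i j + r)
    (hI : I.Nonempty) : LPval B I ≤ LPval A I + r := by
  rw [← sub_le_iff_le_add]
  refine le_csInf (lpFeasibleValues_nonempty A hI) ?_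
  rintro μ ⟨x, hx₀, hxI, hx₁, hxμ⟩
  rw [sub_le_iff_le_add]
  refine csInf_le (lpFeasibleValues_bddBelow B I) ⟨x, hx₀, hxI, hx₁, fun j => ?_⟩
  calc ∑ i, B i j * x i ≤ ∑ i, (A i j * x i + r * x i) :=
        Finset.sum_le_sum fun i _ => by nlinarith [hr i j, hx₀ i]
    _ = ∑ i, A i j * x i + r * ∑ i, x i := by rw [Finset.sum_add_distrib, Finset.mul_sum]
    _ ≤ μ + r := by rw [hx₁, mul_one]; exact add_le_add_left (hxμ j) r

theorem abs_sub_le [Nonempty (Fin m2)] {r : ℝ} (hr : ∀ i j, |B i j - A i j| ≤ r)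
    (hI : I.Nonempty) : |LPval B I - LPval A I| ≤ r := by
  have hBA : ∀ i j, B i j ≤ A i j + r := fun i j => by linarith [(abs_le.mp (hr i j)).2]
  have hAB : ∀ i j, A i j ≤ B i j + r := fun i j => by linarith [(abs_le.mp (hr i j)).1]
  have h₁ := le_add_of_le_add hBA hI
  have h₂ := le_add_of_le_add hAB hI
  exact abs_le.mpr ⟨by linarith, by linarith⟩

end LPval

/-- Let `δ > 0` be the minimal positive gap of the primal game LP
of `A`, and suppose `Â` satisfies `|Â − A| ≤ r` entrywise with `r < δ/2`. If a
(nonempty) subset `I` is an optimal support for the empirical LP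
(`V̂_I = V̂`), then it is an optimal support for the true LP (`V_I = V`). -/
theorem stmt_13 (m1 m2 : ℕ) (A Ahat : Matrix (Fin m1) (Fin m2) ℝ) (r δ : ℝ)
    (hδ : IsLeast {g : ℝ | ∃ I : Finset (Fin m1), I.Nonempty ∧
        g = LPval A I - LPval A Finset.univ ∧ 0 < g} δ)
    (hr : ∀ i j, |Ahat i j - A i j| ≤ r) (hrδ : r < δ / 2)
    (I : Finset (Fin m1)) (hI : I.Nonempty)
    (hemp : LPval Ahat I = LPval Ahat Finset.univ) :
    LPval A I = LPval A Finset.univ := by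
  have huniv : (Finset.univ : Finset (Fin m1)).Nonempty := hI.mono (Finset.subset_univ I)
  cases isEmpty_or_nonempty (Fin m2)
  · rw [LPval.eq_zero_of_isEmpty A hI, LPval.eq_zero_of_isEmpty A huniv]
  have hV_le : LPval A Finset.univ ≤ LPval A I := LPval.le_of_subset A (Finset.subset_univ I) hI
  have hI_close := abs_le.mp (LPval.abs_sub_le hr hI)
  have huniv_close := abs_le.mp (LPval.abs_sub_le hr huniv)
  by_contra hne
  have hgap : 0 < LPval A I - LPval A Finset.univ :=
    sub_pos.mpr (lt_of_le_of_ne hV_le (Ne.symm hne))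
  have hδ_le : δ ≤ LPval A I - LPval A Finset.univ := hδ.2 ⟨I, hI, rfl, hgap⟩
  linarith [hI_close.1, huniv_close.2]
end
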